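/- 1 ≤ R(c₀) ≤ 4/3: every sequence in B_{c₀} admits a convex block subsequence (z_n) with ca((z_n)) ≤ 4/3; in fact after passing to a coordinatewise-convergent subsequence with successive finite supports one may take z_n = (2/3)x_{2n} + (1/3)x_{2n+1}. -/

import Mathlib

open Filter Topology Metric Set NormedSpace

noncomputable section

/-- `y` is a convex block subsequence of `x`. -/
def IsConvexBlock {E : Type*} [AddCommGroup E] [Module ℝ E] (x y : ℕ → E) : Prop :=
  ∃ k : ℕ → ℕ, k 0 = 0 ∧ StrictMono k ∧
    ∀ n, y n ∈ convexHull ℝ (x '' Set.Ico (k n) (k (n + 1)))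

variable (X : Type*) [NormedAddCommGroup X] [NormedSpace ℝ X]

/-- A set is weakly compact if its image in the weak topology is compact. -/
def WeaklyCompact (K : Set X) : Prop := IsCompact (toWeakSpace ℝ X '' K)

/-- A sequence is weakly null. -/
def WeaklyNull (x : ℕ → X) : Prop :=
  ∀ f : X →L[ℝ] ℝ, Tendsto (fun n => f (x n)) atTop (𝓝 0)

/-- A sequence in the dual is weak* null. -/
def WeakStarNull (f : ℕ → X →L[ℝ] ℝ) : Prop :=
  ∀ x : X, Tendsto (fun n => f n x) atTop (𝓝 0)

/-- A sequence in the dual is weak* Cauchy. -/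
def WeakStarCauchy (f : ℕ → X →L[ℝ] ℝ) : Prop :=
  ∀ x : X, ∃ L : ℝ, Tendsto (fun n => f n x) atTop (𝓝 L)

variable {X}

/-- α((f_n)) = sup over weakly compact K ⊆ B_X of limsup_n sup_{x ∈ K} |⟨f_n, x⟩|. -/
def alphaQ (f : ℕ → X →L[ℝ] ℝ) : ℝ :=
  sSup { r | ∃ K : Set X, K ⊆ closedBall 0 1 ∧ WeaklyCompact X K ∧
    r = limsup (fun n => sSup ((fun x => |f n x|) '' K)) atTop }

/-- β((f_n)) = sup over weakly null (x_n) in B_X of limsup_n |⟨f_n, x_n⟩|. -/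
def betaQ (f : ℕ → X →L[ℝ] ℝ) : ℝ :=
  sSup { r | ∃ x : ℕ → X, (∀ n, x n ∈ closedBall (0 : X) 1) ∧ WeaklyNull X x ∧
    r = limsup (fun n => |f n (x n)|) atTop }

/-- ca_{ρ*}((f_n)): measures Mackey-Cauchyness. -/
def caRho (f : ℕ → X →L[ℝ] ℝ) : ℝ :=
  sSup { r | ∃ K : Set X, K ⊆ closedBall 0 1 ∧ WeaklyCompact X K ∧
    r = ⨅ n : ℕ, sSup { t | ∃ k ≥ n, ∃ l ≥ n, ∃ x ∈ K, t = |(f k - f l) x| } }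

/-- ca((z_n)) = inf_n sup_{k,l ≥ n} ‖z_k - z_l‖. -/
def caSeq {E : Type*} [NormedAddCommGroup E] (z : ℕ → E) : ℝ :=
  ⨅ n : ℕ, sSup { r | ∃ k ≥ n, ∃ l ≥ n, r = ‖z k - z l‖ }

variable (X)

def K1 : ℝ :=
  sSup { r | ∃ f : ℕ → X →L[ℝ] ℝ, (∀ n, ‖f n‖ ≤ 1) ∧ WeakStarNull X f ∧
    r = sInf { s | ∃ g, IsConvexBlock f g ∧ s = alphaQ g } }

def K2 : ℝ :=
  sSup { r | ∃ f : ℕ → X →L[ℝ] ℝ, (∀ n, ‖f n‖ ≤ 1) ∧ WeakStarNull X f ∧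
    r = sInf { s | ∃ g, IsConvexBlock f g ∧ s = betaQ g } }

def K3 : ℝ :=
  sSup { r | ∃ f : ℕ → X →L[ℝ] ℝ, (∀ n, ‖f n‖ ≤ 1) ∧ WeakStarCauchy X f ∧
    r = sInf { s | ∃ g, IsConvexBlock f g ∧ s = caRho g } }

/-- Property (K). -/
def PropertyK : Prop :=
  ∀ f : ℕ → X →L[ℝ] ℝ, WeakStarNull X f → ∃ g, IsConvexBlock f g ∧ alphaQ g = 0

/-- The Grothendieck property: every weak* null sequence in the dual is weakly null. -/
def Grothendieck : Prop :=
  ∀ f : ℕ → X →L[ℝ] ℝ, WeakStarNull X f →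
    ∀ Φ : (X →L[ℝ] ℝ) →L[ℝ] ℝ, Tendsto (fun n => Φ (f n)) atTop (𝓝 0)

def GQ : ℝ :=
  sSup { r | ∃ f : ℕ → X →L[ℝ] ℝ, (∀ n, ‖f n‖ ≤ 1) ∧ WeakStarNull X f ∧
    r = sInf { s | ∃ g, IsConvexBlock f g ∧ s = limsup (fun n => ‖g n‖) atTop } }

def RQ : ℝ :=
  sSup { r | ∃ x : ℕ → X, (∀ n, x n ∈ closedBall (0 : X) 1) ∧
    r = sInf { s | ∃ z, IsConvexBlock x z ∧ s = caSeq z } }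

/-- weak* cluster points in the bidual of a sequence in the bidual. -/
def WStarClusterPts (u : ℕ → (X →L[ℝ] ℝ) →L[ℝ] ℝ) : Set ((X →L[ℝ] ℝ) →L[ℝ] ℝ) :=
  { z | MapClusterPt (StrongDual.toWeakDual (𝕜 := ℝ) z) atTop
      (fun n => StrongDual.toWeakDual (𝕜 := ℝ) (u n)) }

def wckQ (A : Set X) : ℝ :=
  sSup { r | ∃ x : ℕ → X, (∀ n, x n ∈ A) ∧
    r = sInf { s | ∃ z ∈ WStarClusterPts X (fun n => inclusionInDoubleDual ℝ X (x n)),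
      ∃ v : X, s = ‖z - inclusionInDoubleDual ℝ X v‖ } }

/-!
Lower bound: for the summing basis `s n = 𝟙_{[0, n]}` of `c₀`, two consecutive blocks of any
convex block sequence differ by `1` at the first index of the later block.

Upper bound: a sequence in the unit ball has a coordinatewise convergent subsequence, with
limit `a`, and a further "gliding hump" subsequence `y` such that at each coordinate `j` there is
an index `r` with `y p j ≈ 0` for `p < r` and `y p j ≈ a j` for `p > r`. For
`z n = (2/3) y (2n) + (1/3) y (2n+1)` and `k < l`, the coordinate `j` of `z k - z l` is then,
up to a vanishing error, one of `0`, `(2/3)(u - a j)`, `u/3 - a j`, `-a j`, `-(2/3)u - (1/3)a j`,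
`-u/3`, where `u = y r j`; all of these have absolute value at most `4/3`.
-/

open scoped ZeroAtInfty

section caSeq

variable {E : Type*} [NormedAddCommGroup E]

lemma caSeq_nonneg (z : ℕ → E) : 0 ≤ caSeq z :=
  Real.iInf_nonneg fun _ => Real.sSup_nonneg (by rintro _ ⟨k, -, l, -, rfl⟩; positivity)

lemma caSeq_le_of_forall_ge {z : ℕ → E} {c : ℝ} (n : ℕ)
    (h : ∀ k ≥ n, ∀ l ≥ n, ‖z k - z l‖ ≤ c) : caSeq z ≤ c := by
  refine (ciInf_le ⟨0, ?_⟩ n).trans (csSup_le ⟨_, n, le_rfl, n, le_rfl, rfl⟩ ?_)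
  · rintro _ ⟨m, rfl⟩
    exact Real.sSup_nonneg (by rintro _ ⟨k, -, l, -, rfl⟩; positivity)
  · rintro _ ⟨k, hk, l, hl, rfl⟩
    exact h k hk l hl

lemma le_caSeq {z : ℕ → E} {M c : ℝ} (hz : ∀ n, ‖z n‖ ≤ M)
    (h : ∀ n, ∃ k ≥ n, ∃ l ≥ n, c ≤ ‖z k - z l‖) : c ≤ caSeq z := by
  refine le_ciInf fun n => ?_
  obtain ⟨k, hk, l, hl, hc⟩ := h n
  refine hc.trans (le_csSup ⟨M + M, ?_⟩ ⟨k, hk, l, hl, rfl⟩)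
  rintro _ ⟨k, -, l, -, rfl⟩
  exact norm_sub_le_of_le (hz k) (hz l)

end caSeq

section IsConvexBlock

variable {E : Type*} [AddCommGroup E] [Module ℝ E]

lemma isConvexBlock_self (x : ℕ → E) : IsConvexBlock x x :=
  ⟨id, rfl, strictMono_id, fun n => subset_convexHull ℝ _ ⟨n, ⟨le_rfl, n.lt_succ_self⟩, rfl⟩⟩

lemma IsConvexBlock.of_comp {x z : ℕ → E} {σ : ℕ → ℕ} (hσ : StrictMono σ)
    (h : IsConvexBlock (x ∘ σ) z) : IsConvexBlock x z := by
  obtain ⟨k, hk0, hk, hz⟩ := h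
  refine ⟨fun n => if n = 0 then 0 else σ (k n), if_pos rfl, strictMono_nat_of_lt_succ ?_, ?_⟩
  · intro n
    rcases n.eq_zero_or_pos with rfl | hn
    · simpa using (hσ.id_le _).trans_lt' (hk0 ▸ hk Nat.zero_lt_one)
    · simpa [hn.ne'] using hσ (hk n.lt_succ_self)
  · intro n
    refine convexHull_mono ?_ (hz n)
    rintro _ ⟨i, ⟨hni, hin⟩, rfl⟩
    refine ⟨σ i, ⟨?_, by simpa using hσ hin⟩, rfl⟩
    dsimp only
    split_ifs
    exacts [Nat.zero_le _, hσ.monotone hni]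

lemma isConvexBlock_of_mem_segment {y z : ℕ → E}
    (h : ∀ n, z n ∈ segment ℝ (y (2 * n)) (y (2 * n + 1))) : IsConvexBlock y z :=
  ⟨fun n => 2 * n, rfl, strictMono_id.const_mul two_pos, fun n =>
    segment_subset_convexHull (mem_image_of_mem y (show 2 * n ∈ Ico (2 * n) (2 * (n + 1)) by simp))
      (mem_image_of_mem y (show 2 * n + 1 ∈ Ico (2 * n) (2 * (n + 1)) by simp; omega)) (h n)⟩

end IsConvexBlock

section RQ

variable {X : Type*} [NormedAddCommGroup X] [NormedSpace ℝ X]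

lemma sInf_caSeq_le {x z : ℕ → X} (hz : IsConvexBlock x z) :
    sInf {s | ∃ z, IsConvexBlock x z ∧ s = caSeq z} ≤ caSeq z :=
  csInf_le ⟨0, by rintro _ ⟨z, -, rfl⟩; exact caSeq_nonneg z⟩ ⟨z, hz, rfl⟩

lemma le_RQ {x : ℕ → X} (hx : ∀ n, ‖x n‖ ≤ 1) {c : ℝ}
    (h : ∀ z, IsConvexBlock x z → c ≤ caSeq z) : c ≤ RQ X := by
  have hbdd : BddAbove {r | ∃ x : ℕ → X, (∀ n, x n ∈ closedBall (0 : X) 1) ∧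
      r = sInf {s | ∃ z, IsConvexBlock x z ∧ s = caSeq z}} := by
    refine ⟨1 + 1, ?_⟩
    rintro _ ⟨y, hy, rfl⟩
    refine (sInf_caSeq_le (isConvexBlock_self y)).trans (caSeq_le_of_forall_ge 0 fun k _ l _ => ?_)
    exact norm_sub_le_of_le (mem_closedBall_zero_iff.1 (hy k)) (mem_closedBall_zero_iff.1 (hy l))
  refine le_csSup_of_le hbdd ⟨x, fun n => mem_closedBall_zero_iff.2 (hx n), rfl⟩ ?_
  refine le_csInf ⟨_, x, isConvexBlock_self x, rfl⟩ ?_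
  rintro _ ⟨z, hz, rfl⟩
  exact h z hz

lemma RQ_le {c : ℝ} (hc : 0 ≤ c)
    (h : ∀ x : ℕ → X, (∀ n, ‖x n‖ ≤ 1) → ∃ z, IsConvexBlock x z ∧ caSeq z ≤ c) : RQ X ≤ c := by
  refine Real.sSup_le ?_ hc
  rintro _ ⟨x, hx, rfl⟩
  obtain ⟨z, hz, hzc⟩ := h x fun n => mem_closedBall_zero_iff.1 (hx n)
  exact (sInf_caSeq_le hz).trans hzc

end RQ

namespace ZeroAtInftyContinuousMap

variable {α : Type*} [TopologicalSpace α]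

lemma abs_apply_le_norm (f : C₀(α, ℝ)) (j : α) : |f j| ≤ ‖f‖ :=
  f.toBCF.norm_coe_le_norm j

lemma norm_le_of_forall_abs_apply_le {f : C₀(α, ℝ)} {c : ℝ} (hc : 0 ≤ c) (h : ∀ j, |f j| ≤ c) :
    ‖f‖ ≤ c :=
  norm_toBCF_eq_norm (f := f) ▸ (BoundedContinuousFunction.norm_le hc).2 h

lemma apply_eq_of_mem_convexHull {s : Set C₀(α, ℝ)} {f : C₀(α, ℝ)} (hf : f ∈ convexHull ℝ s)
    {j : α} {c : ℝ} (h : ∀ g ∈ s, g j = c) : f j = c := by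
  refine convexHull_min (t := {g : C₀(α, ℝ) | g j = c}) h (fun p hp q hq u v _ _ huv => ?_) hf
  simp_all [← add_mul]

end ZeroAtInftyContinuousMap

open ZeroAtInftyContinuousMap

def summingBasis (n : ℕ) : C₀(ℕ, ℝ) :=
  ⟨⟨fun j => if j ≤ n then 1 else 0, continuous_of_discreteTopology⟩, by
    rw [cocompact_eq_atTop]
    refine tendsto_const_nhds.congr' ?_
    filter_upwards [eventually_gt_atTop n] with j hj
    simp [Nat.not_le.2 hj]⟩

lemma summingBasis_apply (n j : ℕ) : summingBasis n j = if j ≤ n then 1 else 0 := rfl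

lemma norm_summingBasis_le (n : ℕ) : ‖summingBasis n‖ ≤ 1 :=
  norm_le_of_forall_abs_apply_le zero_le_one fun j => by
    rw [summingBasis_apply]; split_ifs <;> simp

lemma one_le_caSeq_of_isConvexBlock_summingBasis {z : ℕ → C₀(ℕ, ℝ)}
    (hz : IsConvexBlock summingBasis z) : 1 ≤ caSeq z := by
  obtain ⟨k, -, -, hmem⟩ := hz
  have hnorm (n : ℕ) : ‖z n‖ ≤ 1 := by
    refine mem_closedBall_zero_iff.1 (convexHull_min ?_ (convex_closedBall 0 1) (hmem n))
    rintro _ ⟨i, -, rfl⟩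
    exact mem_closedBall_zero_iff.2 (norm_summingBasis_le i)
  refine le_caSeq hnorm fun n => ⟨n + 1, n.le_succ, n, le_rfl, ?_⟩
  have h1 : z (n + 1) (k (n + 1)) = 1 :=
    apply_eq_of_mem_convexHull (hmem (n + 1)) fun _ ⟨i, hi, hg⟩ => by
      simp [← hg, summingBasis_apply, hi.1]
  have h0 : z n (k (n + 1)) = 0 :=
    apply_eq_of_mem_convexHull (hmem n) fun _ ⟨i, hi, hg⟩ => by
      simp [← hg, summingBasis_apply, hi.2]
  simpa [h1, h0] using abs_apply_le_norm (z (n + 1) - z n) (k (n + 1))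

lemma exists_tendsto_apply_subseq {x : ℕ → C₀(ℕ, ℝ)} (hx : ∀ n, ‖x n‖ ≤ 1) :
    ∃ a : ℕ → ℝ, (∀ j, |a j| ≤ 1) ∧
      ∃ φ : ℕ → ℕ, StrictMono φ ∧ ∀ j, Tendsto (fun n => x (φ n) j) atTop (𝓝 (a j)) := by
  have hcube : IsCompact (univ.pi fun _ : ℕ => Icc (-1 : ℝ) 1) :=
    isCompact_univ_pi fun _ => isCompact_Icc
  obtain ⟨a, ha, φ, hφ, hlim⟩ := hcube.tendsto_subseq (x := fun n j => x n j)
    fun n j _ => abs_le.1 ((abs_apply_le_norm (x n) j).trans (hx n))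
  exact ⟨a, fun j => abs_le.2 (ha j trivial), φ, hφ, tendsto_pi_nhds.1 hlim⟩

lemma exists_gliding_hump {x : ℕ → C₀(ℕ, ℝ)} {a : ℕ → ℝ}
    (hx : ∀ j, Tendsto (fun n => x n j) atTop (𝓝 (a j))) {ε : ℕ → ℝ} (hε : ∀ n, 0 < ε n)
    (hε_anti : Antitone ε) :
    ∃ σ : ℕ → ℕ, StrictMono σ ∧ ∀ j, ∃ r,
      (∀ p < r, |x (σ p) j| ≤ ε p) ∧ ∀ p, r < p → |x (σ p) j - a j| ≤ ε p := by
  obtain ⟨φ, hφ, hφa⟩ : ∃ φ : ℕ → ℕ, StrictMono φ ∧ ∀ n, ∀ j ∈ Iic n, |x (φ n) j - a j| ≤ ε n :=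
    extraction_forall_of_eventually fun n => (eventually_all_finite (finite_Iic n)).2 fun j _ =>
      (Metric.tendsto_nhds.1 (hx j) (ε n) (hε n)).mono fun _ h => h.le
  have tail (m : ℕ) : ∃ T ≥ m, ∀ j > T, |x (φ m) j| ≤ ε m := by
    have h0 : Tendsto (fun j => |x (φ m) j|) atTop (𝓝 0) := by
      simpa [cocompact_eq_atTop] using (zero_at_infty (x (φ m))).abs
    obtain ⟨T, hT, hTm⟩ :=
      ((eventually_forall_ge_atTop.2 (h0.eventually_lt_const (hε m))).and
        (eventually_ge_atTop m)).exists
    exact ⟨T, hTm, fun j hj => (hT j hj.le).le⟩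
  choose T hTm hT using tail
  obtain ⟨ψ, hψ, hTψ, -⟩ :=
    hasAntitoneBasis_atTop.subbasis_with_rel fun m => eventually_ge_atTop (T m)
  refine ⟨φ ∘ ψ, hφ.comp hψ, fun j => ?_⟩
  have hex : ∃ i, j ≤ T (ψ i) := ⟨j, (hψ.id_le j).trans (hTm _)⟩
  refine ⟨Nat.find hex, fun p hp => ?_, fun p hp => ?_⟩
  · exact (hT _ j (not_le.1 (Nat.find_min hex hp))).trans (hε_anti (hψ.id_le p))
  · exact (hφa _ j ((Nat.find_spec hex).trans (hTψ hp))).trans (hε_anti (hψ.id_le p))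

lemma abs_weighted_diff_le {u : ℕ → ℝ} {a ε : ℝ} {r p₀ p₁ p₂ p₃ : ℕ} (h₀₁ : p₀ < p₁)
    (h₁₂ : p₁ < p₂) (h₂₃ : p₂ < p₃) (ha : |a| ≤ 1) (hu : ∀ p, |u p| ≤ 1)
    (hbefore : ∀ p, p₀ ≤ p → p < r → |u p| ≤ ε) (hafter : ∀ p, p₀ ≤ p → r < p → |u p - a| ≤ ε) :
    |2 / 3 * u p₀ + 1 / 3 * u p₁ - (2 / 3 * u p₂ + 1 / 3 * u p₃)| ≤ 4 / 3 + 2 * ε := by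
  have key (p : ℕ) (hp : p₀ ≤ p) : (p < r ∧ |u p| ≤ ε) ∨ p = r ∨ (r < p ∧ |u p - a| ≤ ε) := by
    rcases lt_trichotomy p r with h | h | h
    exacts [.inl ⟨h, hbefore p hp h⟩, .inr (.inl h), .inr (.inr ⟨h, hafter p hp h⟩)]
  have := abs_le.1 ha; have := hu p₀; have := hu p₁; have := hu p₂; have := hu p₃
  rcases key p₀ le_rfl with ⟨h₀, e₀⟩ | h₀ | ⟨h₀, e₀⟩ <;>
  rcases key p₁ h₀₁.le with ⟨h₁, e₁⟩ | h₁ | ⟨h₁, e₁⟩ <;>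
  rcases key p₂ (h₀₁.trans h₁₂).le with ⟨h₂, e₂⟩ | h₂ | ⟨h₂, e₂⟩ <;>
  rcases key p₃ (h₀₁.trans (h₁₂.trans h₂₃)).le with ⟨h₃, e₃⟩ | h₃ | ⟨h₃, e₃⟩ <;>
  first
  | omega
  | simp only [abs_le] at *; constructor <;> linarith

theorem exists_isConvexBlock_caSeq_le_four_thirds {x : ℕ → C₀(ℕ, ℝ)} (hx : ∀ n, ‖x n‖ ≤ 1) :
    ∃ z, IsConvexBlock x z ∧ caSeq z ≤ 4 / 3 := by
  obtain ⟨a, ha, φ, hφ, hlim⟩ := exists_tendsto_apply_subseq hx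
  obtain ⟨σ, hσ, hump⟩ := exists_gliding_hump hlim (ε := fun n => (1 / 2 : ℝ) ^ n)
    (fun n => by positivity) fun _ _ h => pow_le_pow_of_le_one (by norm_num) (by norm_num) h
  set y := x ∘ φ ∘ σ
  set z : ℕ → C₀(ℕ, ℝ) := fun n => (2 / 3 : ℝ) • y (2 * n) + (1 / 3 : ℝ) • y (2 * n + 1)
  have hblock : IsConvexBlock x z :=
    ((isConvexBlock_of_mem_segment fun n =>
      ⟨2 / 3, 1 / 3, by norm_num, by norm_num, by norm_num, rfl⟩).of_comp hσ).of_comp hφ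
  have hclose (n k l : ℕ) (hk : n ≤ k) (hkl : k < l) : ‖z k - z l‖ ≤ 4 / 3 + 2 * (1 / 2) ^ n := by
    refine norm_le_of_forall_abs_apply_le (by positivity) fun j => ?_
    obtain ⟨r, hbefore, hafter⟩ := hump j
    have hsmall {p : ℕ} (hp : n ≤ p) : (1 / 2 : ℝ) ^ p ≤ (1 / 2) ^ n :=
      pow_le_pow_of_le_one (by norm_num) (by norm_num) hp
    simpa [z] using abs_weighted_diff_le (u := fun p => y p j) (r := r)
      (by omega : 2 * k < 2 * k + 1) (by omega : 2 * k + 1 < 2 * l) (by omega : 2 * l < 2 * l + 1)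
      (ha j)
      (fun p => (abs_apply_le_norm _ j).trans (hx _))
      (fun p hp hpr => (hbefore p hpr).trans (hsmall (by omega)))
      (fun p hp hrp => (hafter p hrp).trans (hsmall (by omega)))
  have hbound : Tendsto (fun n : ℕ => 4 / 3 + 2 * (1 / 2 : ℝ) ^ n) atTop (𝓝 (4 / 3)) := by
    have hpow :=
      tendsto_pow_atTop_nhds_zero_of_lt_one (r := (1 / 2 : ℝ)) (by norm_num) (by norm_num)
    simpa using tendsto_const_nhds.add (hpow.const_mul 2)
  refine ⟨z, hblock, ge_of_tendsto' hbound fun n => caSeq_le_of_forall_ge n fun k hk l hl => ?_⟩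
  rcases lt_trichotomy k l with hkl | rfl | hlk
  · exact hclose n k l hk hkl
  · simpa using by positivity
  · exact norm_sub_rev (z k) (z l) ▸ hclose n l k hl hlk

theorem stmt16 : 1 ≤ RQ (ZeroAtInftyContinuousMap ℕ ℝ) ∧
    RQ (ZeroAtInftyContinuousMap ℕ ℝ) ≤ 4 / 3 :=
  ⟨le_RQ norm_summingBasis_le fun _ => one_le_caSeq_of_isConvexBlock_summingBasis,
    RQ_le (by norm_num) fun _ => exists_isConvexBlock_caSeq_le_four_thirds⟩
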